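/- For Avg-Swap games and for Cutoff_λ-Swap games (for any λ > 0): every coalition structure that minimizes the social cost among all coalition structures with the same coalition sizes is swap stable. Consequently the price of stability of these games equals 1. -/
import Mathlib


open Finset

noncomputable section

/-- The coalition with index `c` of the coalition structure given by the assignment `P`
(coalition structures with at most `k` coalitions are modeled as assignments
`P : Fin n → Fin k` of the agents to coalition indices; indices whose coalition is
empty do not count as coalitions). -/
def coal {n k : ℕ} (P : Fin n → Fin k) (c : Fin k) : Finset (Fin n) :=
  Finset.univ.filter (fun i => P i = c)

/-- Average cost of agent `i` in its coalition: the average distance to the other members.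
(An agent alone in its coalition has cost `0/0 = 0`, the happy-in-isolation convention.) -/
def costAVG {n k : ℕ} (v : Fin n → ℝ) (P : Fin n → Fin k) (i : Fin n) : ℝ :=
  (∑ j ∈ (coal P (P i)).erase i, |v i - v j|) / (((coal P (P i)).card : ℝ) - 1)

/-- Maximum cost of agent `i` in its coalition: the maximum distance to the other members.
(An agent alone in its coalition has cost `0`, the happy-in-isolation convention.) -/
def costMAX {n k : ℕ} (v : Fin n → ℝ) (P : Fin n → Fin k) (i : Fin n) : ℝ :=
  Finset.fold max 0 (fun j => |v i - v j|) ((coal P (P i)).erase i)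

/-- Cutoff cost of agent `i` in its coalition: the fraction of other members at
distance strictly more than `lam`. (An agent alone has cost `0/0 = 0`.) -/
def costCUT {n k : ℕ} (lam : ℝ) (v : Fin n → ℝ) (P : Fin n → Fin k) (i : Fin n) : ℝ :=
  ((((coal P (P i)).erase i).filter (fun j => lam < |v i - v j|)).card : ℝ) /
    (((coal P (P i)).card : ℝ) - 1)

/-- The coalition structure obtained when agents `i` and `j` exchange their coalitions. -/
def swapP {n k : ℕ} (P : Fin n → Fin k) (i j : Fin n) : Fin n → Fin k :=
  Function.update (Function.update P i (P j)) j (P i)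

/-- A coalition structure is sorted if whenever two agents lie in the same coalition,
every agent whose value lies between their values lies in that coalition as well. -/
def IsSortedStruct {n k : ℕ} (v : Fin n → ℝ) (P : Fin n → Fin k) : Prop :=
  ∀ i j l : Fin n, P i = P j → v i ≤ v l → v l ≤ v j → P l = P i

/-- The multiset of value-profiles of the coalitions of a structure (one entry per
coalition index; two structures have the same nonempty coalitions up to renaming of
agents with equal values iff their profiles agree). -/
def profile {n k : ℕ} (v : Fin n → ℝ) (P : Fin n → Fin k) : Multiset (Multiset ℝ) :=
  (Finset.univ.val : Multiset (Fin k)).map (fun c => (coal P c).val.map v)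

section Aux

variable {n k : ℕ}

/-- Generic cost from a symmetric pairwise weight. -/
def gcost (w : Fin n → Fin n → ℝ) (P : Fin n → Fin k) (a : Fin n) : ℝ :=
  (∑ b ∈ (coal P (P a)).erase a, w a b) / (((coal P (P a)).card : ℝ) - 1)

lemma mem_coal {P : Fin n → Fin k} {c : Fin k} {a : Fin n} :
    a ∈ coal P c ↔ P a = c := by simp [coal]

lemma swapP_eq (P : Fin n → Fin k) (i j : Fin n) :
    swapP P i j = P ∘ (Equiv.swap i j) := by
  funext a
  simp only [swapP, Function.comp, Equiv.swap_apply_def, Function.update]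
  split_ifs with h1 h2 <;> simp_all

lemma coal_swap (P : Fin n → Fin k) (i j : Fin n) (c : Fin k) :
    coal (swapP P i j) c = (coal P c).image (Equiv.swap i j) := by
  ext a
  simp only [mem_coal, Finset.mem_image, swapP_eq, Function.comp]
  constructor
  · intro h
    exact ⟨Equiv.swap i j a, by simpa [mem_coal] using h, Equiv.swap_apply_self _ _ _⟩
  · rintro ⟨x, hx, rfl⟩
    simpa [mem_coal, Equiv.swap_apply_self] using hx

lemma coal_swap_card (P : Fin n → Fin k) (i j : Fin n) (c : Fin k) :
    (coal (swapP P i j) c).card = (coal P c).card := by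
  rw [coal_swap, Finset.card_image_of_injective _ (Equiv.injective _)]

lemma image_swap_mem_not_mem {s : Finset (Fin n)} {i j : Fin n}
    (hi : i ∈ s) (hj : j ∉ s) : s.image (Equiv.swap i j) = insert j (s.erase i) := by
  have hij : i ≠ j := fun h => hj (h ▸ hi)
  ext b
  simp only [Finset.mem_image, Finset.mem_insert, Finset.mem_erase]
  constructor
  · rintro ⟨x, hx, rfl⟩
    rcases eq_or_ne x i with rfl | hxi
    · simp
    rcases eq_or_ne x j with rfl | hxj
    · exact absurd hx hj
    · rw [Equiv.swap_apply_of_ne_of_ne hxi hxj]; exact Or.inr ⟨hxi, hx⟩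
  · rintro (rfl | ⟨hbi, hbs⟩)
    · exact ⟨i, hi, Equiv.swap_apply_left _ _⟩
    · have hbj : b ≠ j := fun h => hj (h ▸ hbs)
      exact ⟨b, hbs, Equiv.swap_apply_of_ne_of_ne hbi hbj⟩

lemma image_swap_not_mem {s : Finset (Fin n)} {i j : Fin n}
    (hi : i ∉ s) (hj : j ∉ s) : s.image (Equiv.swap i j) = s := by
  have : ∀ x ∈ s, Equiv.swap i j x = x := by
    intro x hx
    exact Equiv.swap_apply_of_ne_of_ne (fun h => hi (h ▸ hx)) (fun h => hj (h ▸ hx))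
  rw [Finset.image_congr this]
  simp

/-- Key identity: the change in social cost under a swap is twice the sum of the two
swapping agents' individual cost changes. -/
lemma gcost_swap_sum (w : Fin n → Fin n → ℝ) (hw : ∀ a b, w a b = w b a)
    (P : Fin n → Fin k) (i j : Fin n) (hij : P i ≠ P j) :
    ∑ a, gcost w (swapP P i j) a =
      ∑ a, gcost w P a
        + 2 * ((gcost w (swapP P i j) i - gcost w P i)
             + (gcost w (swapP P i j) j - gcost w P j)) := by
  have hji : i ≠ j := fun h => hij (by rw [h])
  set Q := swapP P i j with hQdef
  have hQi : Q i = P j := by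
    simp [hQdef, swapP_eq, Equiv.swap_apply_left]
  have hQj : Q j = P i := by
    simp [hQdef, swapP_eq, Equiv.swap_apply_right]
  have hQa : ∀ a, a ≠ i → a ≠ j → Q a = P a := by
    intro a h1 h2
    simp [hQdef, swapP_eq, Equiv.swap_apply_of_ne_of_ne h1 h2]
  have hiC1 : i ∈ coal P (P i) := mem_coal.mpr rfl
  have hjC2 : j ∈ coal P (P j) := mem_coal.mpr rfl
  have hjC1 : j ∉ coal P (P i) := fun h => hij (mem_coal.mp h).symm
  have hiC2 : i ∉ coal P (P j) := fun h => hij (mem_coal.mp h)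
  have hQC1 : coal Q (P i) = insert j ((coal P (P i)).erase i) := by
    rw [hQdef, coal_swap]; exact image_swap_mem_not_mem hiC1 hjC1
  have hQC2 : coal Q (P j) = insert i ((coal P (P j)).erase j) := by
    rw [hQdef, coal_swap, Equiv.swap_comm]; exact image_swap_mem_not_mem hjC2 hiC2
  have hcard1 : (coal Q (P i)).card = (coal P (P i)).card := coal_swap_card P i j _
  have hcard2 : (coal Q (P j)).card = (coal P (P j)).card := coal_swap_card P i j _
  -- individual cost formulas for i and j after swap
  have hgQj : gcost w Q j = (∑ b ∈ (coal P (P i)).erase i, w j b) /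
      (((coal P (P i)).card : ℝ) - 1) := by
    have he : (coal Q (Q j)).erase j = (coal P (P i)).erase i := by
      rw [hQj, hQC1, Finset.erase_insert (fun h => hjC1 (Finset.mem_of_mem_erase h))]
    rw [gcost, he, hQj, hcard1]
  have hgQi : gcost w Q i = (∑ b ∈ (coal P (P j)).erase j, w i b) /
      (((coal P (P j)).card : ℝ) - 1) := by
    have he : (coal Q (Q i)).erase i = (coal P (P j)).erase j := by
      rw [hQi, hQC2, Finset.erase_insert (fun h => hiC2 (Finset.mem_of_mem_erase h))]
    rw [gcost, he, hQi, hcard2]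
  -- agents outside the two coalitions are unaffected
  have hzero : ∀ a, a ∉ coal P (P i) ∪ coal P (P j) → gcost w Q a = gcost w P a := by
    intro a ha
    rw [Finset.mem_union, not_or, mem_coal, mem_coal] at ha
    have hai : a ≠ i := fun h => ha.1 (h ▸ rfl)
    have haj : a ≠ j := fun h => ha.2 (h ▸ rfl)
    have hQa' := hQa a hai haj
    have hc : coal Q (P a) = coal P (P a) := by
      rw [hQdef, coal_swap]
      exact image_swap_not_mem (fun h => ha.1 (mem_coal.mp h).symm)
        (fun h => ha.2 (mem_coal.mp h).symm)
    rw [gcost, gcost, hQa', hc]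
  -- cost change for other agents in coalition of i
  have hC1a : ∀ a ∈ (coal P (P i)).erase i,
      gcost w Q a - gcost w P a = (w a j - w a i) / (((coal P (P i)).card : ℝ) - 1) := by
    intro a ha
    rw [Finset.mem_erase] at ha
    obtain ⟨hai, haC1⟩ := ha
    have hPa : P a = P i := mem_coal.mp haC1
    have haj : a ≠ j := fun h => hjC1 (h ▸ haC1)
    have hQa' : Q a = P i := by rw [hQa a hai haj, hPa]
    have hnum : ∑ b ∈ (coal Q (Q a)).erase a, w a b
        = w a j + ∑ b ∈ ((coal P (P i)).erase i).erase a, w a b := by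
      rw [hQa', hQC1, Finset.erase_insert_of_ne haj.symm,
        Finset.sum_insert (fun h => hjC1 (Finset.mem_of_mem_erase (Finset.mem_of_mem_erase h)))]
    have hnum' : ∑ b ∈ (coal P (P a)).erase a, w a b
        = w a i + ∑ b ∈ ((coal P (P i)).erase i).erase a, w a b := by
      rw [hPa, Finset.erase_right_comm]
      exact (Finset.add_sum_erase _ _ (Finset.mem_erase.mpr ⟨fun h => hai h.symm, hiC1⟩)).symm
    have hcarda : (coal Q (Q a)).card = (coal P (P a)).card := by
      rw [hQa', hPa, hcard1]
    rw [gcost, gcost, hnum, hnum', hcarda, hPa, div_sub_div_same]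
    ring_nf
  -- cost change for other agents in coalition of j
  have hC2a : ∀ a ∈ (coal P (P j)).erase j,
      gcost w Q a - gcost w P a = (w a i - w a j) / (((coal P (P j)).card : ℝ) - 1) := by
    intro a ha
    rw [Finset.mem_erase] at ha
    obtain ⟨haj, haC2⟩ := ha
    have hPa : P a = P j := mem_coal.mp haC2
    have hai : a ≠ i := fun h => hiC2 (h ▸ haC2)
    have hQa' : Q a = P j := by rw [hQa a hai haj, hPa]
    have hnum : ∑ b ∈ (coal Q (Q a)).erase a, w a b
        = w a i + ∑ b ∈ ((coal P (P j)).erase j).erase a, w a b := by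
      rw [hQa', hQC2, Finset.erase_insert_of_ne hai.symm,
        Finset.sum_insert (fun h => hiC2 (Finset.mem_of_mem_erase (Finset.mem_of_mem_erase h)))]
    have hnum' : ∑ b ∈ (coal P (P a)).erase a, w a b
        = w a j + ∑ b ∈ ((coal P (P j)).erase j).erase a, w a b := by
      rw [hPa, Finset.erase_right_comm]
      exact (Finset.add_sum_erase _ _ (Finset.mem_erase.mpr ⟨fun h => haj h.symm, hjC2⟩)).symm
    have hcarda : (coal Q (Q a)).card = (coal P (P a)).card := by
      rw [hQa', hPa, hcard2]
    rw [gcost, gcost, hnum, hnum', hcarda, hPa, div_sub_div_same]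
    ring_nf
  -- assemble
  set f := fun a => gcost w Q a - gcost w P a with hf
  have hdisj : Disjoint (coal P (P i)) (coal P (P j)) := by
    rw [Finset.disjoint_left]
    intro a h1 h2
    exact hij ((mem_coal.mp h1).symm.trans (mem_coal.mp h2))
  have h1 : ∑ a, f a = ∑ a ∈ coal P (P i) ∪ coal P (P j), f a := by
    refine (Finset.sum_subset (Finset.subset_univ _) ?_).symm
    intro x _ hx
    simp only [hf]
    rw [hzero x hx]; ring
  have h2 : ∑ a ∈ coal P (P i) ∪ coal P (P j), f a
      = ∑ a ∈ coal P (P i), f a + ∑ a ∈ coal P (P j), f a := Finset.sum_union hdisj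
  have h3 : ∑ a ∈ coal P (P i), f a = f i + ∑ a ∈ (coal P (P i)).erase i, f a :=
    (Finset.add_sum_erase _ _ hiC1).symm
  have h4 : ∑ a ∈ coal P (P j), f a = f j + ∑ a ∈ (coal P (P j)).erase j, f a :=
    (Finset.add_sum_erase _ _ hjC2).symm
  have h5 : ∑ a ∈ (coal P (P i)).erase i, f a = gcost w Q j - gcost w P i := by
    have hgPi : gcost w P i = (∑ b ∈ (coal P (P i)).erase i, w i b) /
        (((coal P (P i)).card : ℝ) - 1) := rfl
    rw [Finset.sum_congr rfl hC1a, hgQj, hgPi, ← Finset.sum_div, div_sub_div_same,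
      Finset.sum_sub_distrib]
    congr 2
    · exact Finset.sum_congr rfl fun b _ => hw b j
    · exact Finset.sum_congr rfl fun b _ => hw b i
  have h6 : ∑ a ∈ (coal P (P j)).erase j, f a = gcost w Q i - gcost w P j := by
    have hgPj : gcost w P j = (∑ b ∈ (coal P (P j)).erase j, w j b) /
        (((coal P (P j)).card : ℝ) - 1) := rfl
    rw [Finset.sum_congr rfl hC2a, hgQi, hgPj, ← Finset.sum_div, div_sub_div_same,
      Finset.sum_sub_distrib]
    congr 2
    · exact Finset.sum_congr rfl fun b _ => hw b i
    · exact Finset.sum_congr rfl fun b _ => hw b j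
  have hsum : ∑ a, f a = 2 * ((gcost w Q i - gcost w P i) + (gcost w Q j - gcost w P j)) := by
    rw [h1, h2, h3, h4, h5, h6]
    simp only [hf]
    ring
  have hdistrib : ∑ a, f a = (∑ a, gcost w Q a) - ∑ a, gcost w P a := by
    simp only [hf]
    rw [Finset.sum_sub_distrib]
  linarith [hsum, hdistrib]

/-- The generic stability result. -/
lemma gcost_optimum_stable (w : Fin n → Fin n → ℝ) (hw : ∀ a b, w a b = w b a)
    (P : Fin n → Fin k)
    (hmin : ∀ Q : Fin n → Fin k, (∀ c : Fin k, (coal Q c).card = (coal P c).card) →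
      (∑ i, gcost w P i) ≤ ∑ i, gcost w Q i) :
    ∀ i j : Fin n, P i ≠ P j →
      ¬ (gcost w (swapP P i j) i < gcost w P i ∧
         gcost w (swapP P i j) j < gcost w P j) := by
  intro i j hij ⟨h1, h2⟩
  have hkey := gcost_swap_sum w hw P i j hij
  have hle := hmin (swapP P i j) (coal_swap_card P i j)
  linarith

end Aux

/-- in Avg-Swap games and in Cutoff_λ-Swap games (λ > 0), every coalition
structure minimizing the social cost among all structures with the same coalition
sizes is swap stable. Consequently the price of stability of these games equals 1. -/
theorem avg_cutoff_swap_optimum_is_stable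
    {n k : ℕ} (v : Fin n → ℝ) (lam : ℝ) (hlam : 0 < lam)
    (P : Fin n → Fin k) (hsize : ∀ c : Fin k, 2 ≤ (coal P c).card) :
    -- Average cost
    ((∀ Q : Fin n → Fin k, (∀ c : Fin k, (coal Q c).card = (coal P c).card) →
        (∑ i, costAVG v P i) ≤ ∑ i, costAVG v Q i) →
      ∀ i j : Fin n, P i ≠ P j →
        ¬ (costAVG v (swapP P i j) i < costAVG v P i ∧
           costAVG v (swapP P i j) j < costAVG v P j)) ∧
    -- Cutoff_λ cost
    ((∀ Q : Fin n → Fin k, (∀ c : Fin k, (coal Q c).card = (coal P c).card) →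
        (∑ i, costCUT lam v P i) ≤ ∑ i, costCUT lam v Q i) →
      ∀ i j : Fin n, P i ≠ P j →
        ¬ (costCUT lam v (swapP P i j) i < costCUT lam v P i ∧
           costCUT lam v (swapP P i j) j < costCUT lam v P j)) := by
  have hAVG : ∀ (R : Fin n → Fin k) (a : Fin n),
      costAVG v R a = gcost (fun a b => |v a - v b|) R a := fun R a => rfl
  have hCUT : ∀ (R : Fin n → Fin k) (a : Fin n),
      costCUT lam v R a = gcost (fun a b => if lam < |v a - v b| then (1:ℝ) else 0) R a := by
    intro R a
    rw [costCUT, gcost, Finset.sum_boole]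
  constructor
  · intro hmin
    have hmin' : ∀ Q : Fin n → Fin k, (∀ c : Fin k, (coal Q c).card = (coal P c).card) →
        (∑ i, gcost (fun a b => |v a - v b|) P i) ≤ ∑ i, gcost (fun a b => |v a - v b|) Q i := by
      intro Q hQ
      simpa only [hAVG] using hmin Q hQ
    intro i j hij h
    exact gcost_optimum_stable (fun a b => |v a - v b|)
      (fun a b => abs_sub_comm _ _) P hmin' i j hij
      (by simp only [hAVG] at h; exact h)
  · intro hmin
    have hmin' : ∀ Q : Fin n → Fin k, (∀ c : Fin k, (coal Q c).card = (coal P c).card) →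
        (∑ i, gcost (fun a b => if lam < |v a - v b| then (1:ℝ) else 0) P i)
          ≤ ∑ i, gcost (fun a b => if lam < |v a - v b| then (1:ℝ) else 0) Q i := by
      intro Q hQ
      simpa only [hCUT] using hmin Q hQ
    intro i j hij h
    refine gcost_optimum_stable (fun a b => if lam < |v a - v b| then (1:ℝ) else 0)
      (fun a b => by simp only [abs_sub_comm (v a) (v b)]) P hmin' i j hij ?_
    simp only [hCUT] at h
    exact h
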